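/- For k ≥ 3 and a factor u of the Thue–Morse word of length 2^k − 1 ≤ |u| ≤ 3·2^{k-1}: the set Cut_k(u) of cutting sets of order k of u has more than one element if and only if u is a factor of φ^{k-1}(010) or of φ^{k-1}(101); and in that case Cut_k(u) = {C1, C2} with |min C1 − min C2| = 2^{k-1}. -/

import Mathlib

/-!
Since `t = φ(t)`, the letters of `t` at positions `2m, 2m+1` are `t_m, ¬t_m`. Hence a factor of
length at least 4 fixes the parity of its occurrences: an occurrence of `abab` at an odd position
would force three equal consecutive letters in `t`. Two occurrences of `u` at even positions
`2m, 2m'` give occurrences at `m, m'` of the word formed by every other letter of `u`, and an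
occurrence at an odd position extends one letter to the left to an even one. Descending `k - 1`
times, two occurrences of `u` incongruent modulo `2^k` lead to an alternating word of length at
most 3 occurring at positions of both parities, i.e. a factor of `010` or `101`; lifting back,
`u` is a factor of `φ^(k-1)(010)` or `φ^(k-1)(101)` and the two positions differ by `2^(k-1)`
modulo `2^k`. Conversely `010` occurs at 3 and 10, and `101` at 11 and 14.
Since `|u| ≥ 2^k - 1`, the cutting set of an occurrence at `i` determines `i mod 2^k` (and only
depends on it); its minimum is the least `x` with `2^k ∣ x + i`.
-/

/-- Number of occurrences of the second word as a (scattered) subword of the first. -/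
def binom {α : Type*} [DecidableEq α] : List α → List α → ℕ
  | _, [] => 1
  | [], _ :: _ => 0
  | a :: u, b :: v => binom u (b :: v) + if a = b then binom u v else 0

/-- k-binomial equivalence. -/
def BinEq (k : ℕ) (u v : List Bool) : Prop :=
  ∀ x : List Bool, x.length ≤ k → binom u x = binom v x

/-- The Thue–Morse word: `tm n` is the parity of the number of ones
in the binary expansion of `n` (`false` plays the role of the letter 0). -/
def tm (n : ℕ) : Bool := (Nat.digits 2 n).count 1 % 2 == 1

/-- `u` occurs as a (contiguous) factor of the Thue–Morse word. -/
def isFactorTM (u : List Bool) : Prop :=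
  ∃ i : ℕ, u = (List.range u.length).map (fun j => tm (i + j))

/-- The Thue–Morse morphism φ(0)=01, φ(1)=10, extended to words. -/
def phiW (w : List Bool) : List Bool :=
  w.flatMap (fun a => if a then [true, false] else [false, true])

/-- The set of cutting sets of order `k` of a factor `u` of the Thue–Morse word:
for every occurrence `t_[i, i+|u|)` of `u`, the relative positions in `[i, i+|u|]`
of the nonnegative multiples of `2^k`. -/
def CutTM (k : ℕ) (u : List Bool) : Set (Set ℕ) :=
  { S | ∃ i : ℕ, u = (List.range u.length).map (fun j => tm (i + j)) ∧
      S = Set.image (fun m => m - i) {m | i ≤ m ∧ m ≤ i + u.length ∧ 2 ^ k ∣ m} }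

def tmFactor (i n : ℕ) : List Bool := (List.range n).map fun j => tm (i + j)

theorem tm_two_mul (n : ℕ) : tm (2 * n) = tm n := by
  rcases Nat.eq_zero_or_pos n with rfl | hn
  · rfl
  · simp [tm, Nat.digits_def' (by norm_num : 1 < 2) (by omega : 0 < 2 * n)]

theorem tm_two_mul_add_one (n : ℕ) : tm (2 * n + 1) = !tm n := by
  simp only [tm, Nat.digits_def' (by norm_num : 1 < 2) (by omega : 0 < 2 * n + 1)]
  rw [show (2 * n + 1) % 2 = 1 by omega, show (2 * n + 1) / 2 = n by omega, List.count_cons]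
  rcases Nat.mod_two_eq_zero_or_one ((Nat.digits 2 n).count 1) with h | h <;>
    simp [Nat.add_mod, h]

theorem odd_of_tm_eq_tm_succ {n : ℕ} (h : tm n = tm (n + 1)) : Odd n := by
  obtain ⟨m, rfl | rfl⟩ := Nat.even_or_odd' n
  · simp [tm_two_mul, tm_two_mul_add_one] at h
  · exact odd_two_mul_add_one m

theorem not_tm_eq_succ_and_succ_eq (n : ℕ) : ¬ (tm n = tm (n + 1) ∧ tm (n + 1) = tm (n + 2)) :=
  fun ⟨h₁, h₂⟩ => Nat.odd_add_one.mp (odd_of_tm_eq_tm_succ h₂) (odd_of_tm_eq_tm_succ h₁)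

@[simp]
theorem length_tmFactor (i n : ℕ) : (tmFactor i n).length = n := by
  simp [tmFactor]

theorem tmFactor_succ (i n : ℕ) : tmFactor i (n + 1) = tm i :: tmFactor (i + 1) n := by
  simp [tmFactor, List.range_succ_eq_map, Nat.add_assoc, Nat.add_comm 1]

theorem tmFactor_add (i m n : ℕ) : tmFactor i (m + n) = tmFactor i m ++ tmFactor (i + m) n := by
  simp [tmFactor, List.range_add, Nat.add_assoc]

theorem tmFactor_prefix_tmFactor {n n' : ℕ} (i : ℕ) (h : n ≤ n') :
    tmFactor i n <+: tmFactor i n' := by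
  obtain ⟨d, rfl⟩ := Nat.exists_eq_add_of_le h
  rw [tmFactor_add]
  exact List.prefix_append _ _

theorem tmFactor_eq_iff {i i' n : ℕ} :
    tmFactor i n = tmFactor i' n ↔ ∀ j < n, tm (i + j) = tm (i' + j) := by
  simp [tmFactor, List.ext_getElem_iff]

theorem eq_tmFactor_of_append_eq {s u t : List Bool} {p n : ℕ} (h : s ++ u ++ t = tmFactor p n) :
    u = tmFactor (p + s.length) u.length := by
  have hn : n = s.length + u.length + t.length := by
    simpa [Nat.add_assoc] using congrArg List.length h.symm
  rw [hn, tmFactor_add, tmFactor_add] at h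
  exact (List.append_inj (List.append_inj h (by simp)).1 (by simp)).2

theorem phiW_append (s t : List Bool) : phiW (s ++ t) = phiW s ++ phiW t :=
  List.flatMap_append

theorem List.IsInfix.phiW {u w : List Bool} (h : u <:+: w) : phiW u <:+: phiW w := by
  obtain ⟨s, t, rfl⟩ := h
  exact ⟨_root_.phiW s, _root_.phiW t, by rw [phiW_append, phiW_append]⟩

theorem tmFactor_two_mul (m n : ℕ) : tmFactor (2 * m) (2 * n) = phiW (tmFactor m n) := by
  induction n generalizing m with
  | zero => rfl
  | succ n ih =>
    rw [show 2 * (n + 1) = 2 * n + 1 + 1 by ring, tmFactor_succ, tmFactor_succ,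
      show 2 * m + 1 + 1 = 2 * (m + 1) by ring, ih, tmFactor_succ, tm_two_mul,
      tm_two_mul_add_one]
    cases tm m <;> rfl

theorem tmFactor_two_pow_mul (k m n : ℕ) :
    tmFactor (2 ^ k * m) (2 ^ k * n) = phiW^[k] (tmFactor m n) := by
  induction k with
  | zero => simp
  | succ k ih =>
    rw [Function.iterate_succ_apply', ← ih, ← tmFactor_two_mul, pow_succ', mul_assoc, mul_assoc]

theorem tmFactor_eq_of_two_mul {m m' n : ℕ} (h : tmFactor (2 * m) n = tmFactor (2 * m') n) :
    tmFactor m ((n + 1) / 2) = tmFactor m' ((n + 1) / 2) := by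
  rw [tmFactor_eq_iff] at h ⊢
  intro j hj
  simpa [← mul_add, tm_two_mul] using h (2 * j) (by omega)

theorem tmFactor_two_mul_eq_of_two_mul_add_one {m m' n : ℕ} (hn : n ≠ 0)
    (h : tmFactor (2 * m + 1) n = tmFactor (2 * m' + 1) n) :
    tmFactor (2 * m) (n + 1) = tmFactor (2 * m') (n + 1) := by
  have h₀ : tm (2 * m + 1) = tm (2 * m' + 1) := by
    simpa using (tmFactor_eq_iff.mp h) 0 (by omega)
  rw [tm_two_mul_add_one, tm_two_mul_add_one, Bool.not_inj_iff] at h₀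
  rw [tmFactor_succ, tmFactor_succ, h, tm_two_mul, tm_two_mul, h₀]

def PhiIterInfix (k : ℕ) (u : List Bool) : Prop :=
  u <:+: phiW^[k] [false, true, false] ∨ u <:+: phiW^[k] [true, false, true]

theorem PhiIterInfix.of_infix {k : ℕ} {u w : List Bool} (h : PhiIterInfix k w) (hu : u <:+: w) :
    PhiIterInfix k u :=
  h.imp hu.trans hu.trans

theorem PhiIterInfix.phiW {k : ℕ} {u : List Bool} (h : PhiIterInfix k u) :
    PhiIterInfix (k + 1) (phiW u) := by
  simp only [PhiIterInfix, Function.iterate_succ_apply']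
  exact h.imp List.IsInfix.phiW List.IsInfix.phiW

theorem modEq_two_of_tmFactor_eq {i i' n : ℕ} (hn : 4 ≤ n) (h : tmFactor i n = tmFactor i' n) :
    i ≡ i' [MOD 2] := by
  suffices key : ∀ a b, tmFactor (2 * a) n ≠ tmFactor (2 * b + 1) n by
    obtain ⟨a, rfl | rfl⟩ := Nat.even_or_odd' i <;>
      obtain ⟨b, rfl | rfl⟩ := Nat.even_or_odd' i'
    · exact (Nat.mul_mod_right 2 a).trans (Nat.mul_mod_right 2 b).symm
    · exact absurd h (key a b)
    · exact absurd h.symm (key b a)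
    · exact Nat.ModEq.add_right 1 ((Nat.mul_mod_right 2 a).trans (Nat.mul_mod_right 2 b).symm)
  intro a b h
  rw [tmFactor_eq_iff] at h
  have h₀ := h 0 (by omega)
  have h₁ := h 1 (by omega)
  have h₂ := h 2 (by omega)
  have h₃ := h 3 (by omega)
  rw [Nat.add_zero, tm_two_mul, tm_two_mul_add_one] at h₀
  rw [show 2 * b + 1 + 1 = 2 * (b + 1) by ring, tm_two_mul, tm_two_mul_add_one] at h₁
  rw [show 2 * a + 2 = 2 * (a + 1) by ring, show 2 * b + 1 + 2 = 2 * (b + 1) + 1 by ring,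
    tm_two_mul, tm_two_mul_add_one] at h₂
  rw [show 2 * a + 3 = 2 * (a + 1) + 1 by ring, show 2 * b + 1 + 3 = 2 * (b + 2) by ring,
    tm_two_mul, tm_two_mul_add_one] at h₃
  exact not_tm_eq_succ_and_succ_eq b
    ⟨by rw [← h₁, h₀, Bool.not_not], by rw [← h₃, h₂, Bool.not_not]⟩

theorem phiIterInfix_zero_of_tmFactor_eq {i i' n : ℕ} (h : tmFactor i n = tmFactor i' n)
    (hmod : ¬ i ≡ i' [MOD 2]) : PhiIterInfix 0 (tmFactor i n) := by
  have hn : n ≤ 3 := by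
    by_contra! hn
    exact hmod (modEq_two_of_tmFactor_eq hn h)
  have alternating : ∀ j, j + 1 < n → tm (i + j + 1) = !tm (i + j) := by
    intro j hj
    refine Bool.eq_not_of_ne fun heq => hmod ?_
    have e₀ := tmFactor_eq_iff.mp h j (by omega)
    have e₁ := tmFactor_eq_iff.mp h (j + 1) (by omega)
    simp only [← Nat.add_assoc] at e₁
    have heq' : tm (i' + j) = tm (i' + j + 1) := by rw [← e₀, ← e₁, heq]
    obtain ⟨a, ha⟩ := odd_of_tm_eq_tm_succ heq.symm
    obtain ⟨b, hb⟩ := odd_of_tm_eq_tm_succ heq'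
    unfold Nat.ModEq
    omega
  have h_take : tmFactor i n = [tm i, !tm i, tm i].take n := by
    apply List.ext_getElem (by simp; omega)
    intro j hj _
    simp only [length_tmFactor] at hj
    have hj₃ : j < 3 := by omega
    interval_cases j
    · simp [tmFactor]
    · simpa [tmFactor] using alternating 0 (by omega)
    · simpa [tmFactor, alternating 0 (by omega)] using alternating 1 (by omega)
  rw [h_take]
  cases tm i
  · exact Or.inl (List.take_prefix _ _).isInfix
  · exact Or.inr (List.take_prefix _ _).isInfix

theorem phiIterInfix_succ_and_modEq_of_two_mul {k n m m' : ℕ}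
    (ih : tmFactor m ((n + 1) / 2) = tmFactor m' ((n + 1) / 2) → ¬ m ≡ m' [MOD 2 ^ (k + 1)] →
      PhiIterInfix k (tmFactor m ((n + 1) / 2)) ∧ m' ≡ m + 2 ^ k [MOD 2 ^ (k + 1)])
    (h : tmFactor (2 * m) n = tmFactor (2 * m') n) (hmod : ¬ 2 * m ≡ 2 * m' [MOD 2 ^ (k + 2)]) :
    PhiIterInfix (k + 1) (tmFactor (2 * m) n) ∧
      2 * m' ≡ 2 * m + 2 ^ (k + 1) [MOD 2 ^ (k + 2)] := by
  rw [pow_succ' 2 (k + 1)] at hmod ⊢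
  obtain ⟨hinf, hgap⟩ := ih (tmFactor_eq_of_two_mul h) fun h' => hmod (h'.mul_left' 2)
  refine ⟨hinf.phiW.of_infix ?_, ?_⟩
  · rw [← tmFactor_two_mul]
    exact (tmFactor_prefix_tmFactor _ (by omega)).isInfix
  · have := hgap.mul_left' 2
    rwa [mul_add, ← pow_succ' 2 k] at this

theorem phiIterInfix_and_modEq_of_tmFactor_eq (k : ℕ) {n i i' : ℕ} (hn : 2 ^ (k + 1) - 1 ≤ n)
    (hn₄ : k = 0 ∨ 4 ≤ n) (h : tmFactor i n = tmFactor i' n)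
    (hmod : ¬ i ≡ i' [MOD 2 ^ (k + 1)]) :
    PhiIterInfix k (tmFactor i n) ∧ i' ≡ i + 2 ^ k [MOD 2 ^ (k + 1)] := by
  induction k generalizing n i i' with
  | zero =>
    refine ⟨phiIterInfix_zero_of_tmFactor_eq h hmod, ?_⟩
    simp only [Nat.ModEq, zero_add, pow_one, pow_zero] at hmod ⊢
    omega
  | succ k ih =>
    have even_case : ∀ {n m m' : ℕ}, 2 ^ (k + 2) - 1 ≤ n →
        tmFactor (2 * m) n = tmFactor (2 * m') n → ¬ 2 * m ≡ 2 * m' [MOD 2 ^ (k + 2)] →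
        PhiIterInfix (k + 1) (tmFactor (2 * m) n) ∧
          2 * m' ≡ 2 * m + 2 ^ (k + 1) [MOD 2 ^ (k + 2)] := by
      intro n m m' hn
      have hL : 2 ^ (k + 1) ≤ (n + 1) / 2 := by
        have : 2 ^ (k + 2) = 2 * 2 ^ (k + 1) := pow_succ' 2 (k + 1)
        omega
      have hL₄ : k = 0 ∨ 4 ≤ (n + 1) / 2 := by
        rcases Nat.eq_zero_or_pos k with rfl | hk
        · exact Or.inl rfl
        · have : 2 ^ 2 ≤ 2 ^ (k + 1) := Nat.pow_le_pow_right (by norm_num) (by omega)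
          right; omega
      exact phiIterInfix_succ_and_modEq_of_two_mul (ih (by omega) hL₄)
    have hn₄ : 4 ≤ n := by omega
    obtain ⟨m, rfl | rfl⟩ := Nat.even_or_odd' i <;>
      obtain ⟨m', rfl | rfl⟩ := Nat.even_or_odd' i'
    · exact even_case hn h hmod
    · exact absurd (modEq_two_of_tmFactor_eq hn₄ h) (by unfold Nat.ModEq; omega)
    · exact absurd (modEq_two_of_tmFactor_eq hn₄ h) (by unfold Nat.ModEq; omega)
    · obtain ⟨hinf, hgap⟩ := even_case (hn.trans n.le_succ)
        (tmFactor_two_mul_eq_of_two_mul_add_one (by omega) h) fun h' => hmod (h'.add_right 1)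
      refine ⟨hinf.of_infix ?_, ?_⟩
      · rw [tmFactor_succ]
        exact (List.suffix_cons _ _).isInfix
      · rw [show 2 * m + 1 + 2 ^ (k + 1) = 2 * m + 2 ^ (k + 1) + 1 by ring]
        exact hgap.add_right 1

theorem exists_not_modEq_of_infix_phiW_iterate {k p q : ℕ} {u w : List Bool}
    (hp : w = tmFactor p w.length) (hq : w = tmFactor q w.length) (hpq : ¬ p ≡ q [MOD 2])
    (hu : u <:+: phiW^[k] w) :
    ∃ i, u = tmFactor i u.length ∧ ∃ i', u = tmFactor i' u.length ∧
      ¬ i ≡ i' [MOD 2 ^ (k + 1)] := by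
  obtain ⟨s, t, hst⟩ := hu
  have hst_p : s ++ u ++ t = tmFactor (2 ^ k * p) (2 ^ k * w.length) := by
    rw [tmFactor_two_pow_mul, ← hp, hst]
  have hst_q : s ++ u ++ t = tmFactor (2 ^ k * q) (2 ^ k * w.length) := by
    rw [tmFactor_two_pow_mul, ← hq, hst]
  refine ⟨_, eq_tmFactor_of_append_eq hst_p, _, eq_tmFactor_of_append_eq hst_q, fun h => hpq ?_⟩
  rw [pow_succ] at h
  exact Nat.ModEq.mul_left_cancel' (by positivity) (h.add_right_cancel' s.length)

theorem exists_not_modEq_of_phiIterInfix {k : ℕ} {u : List Bool} (h : PhiIterInfix k u) :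
    ∃ i, u = tmFactor i u.length ∧ ∃ i', u = tmFactor i' u.length ∧
      ¬ i ≡ i' [MOD 2 ^ (k + 1)] := by
  rcases h with h | h
  · exact exists_not_modEq_of_infix_phiW_iterate (p := 3) (q := 10)
      (by norm_num [tmFactor, tm, List.range_succ]) (by norm_num [tmFactor, tm, List.range_succ])
      (by decide) h
  · exact exists_not_modEq_of_infix_phiW_iterate (p := 11) (q := 14)
      (by norm_num [tmFactor, tm, List.range_succ]) (by norm_num [tmFactor, tm, List.range_succ])
      (by decide) h

def cutSet (P n i : ℕ) : Set ℕ := (fun m => m - i) '' {m | i ≤ m ∧ m ≤ i + n ∧ P ∣ m}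

theorem cutTM_eq_image (k : ℕ) (u : List Bool) :
    CutTM k u = cutSet (2 ^ k) u.length '' {i | u = tmFactor i u.length} := by
  ext S
  constructor <;> rintro ⟨i, hi, h⟩ <;> exact ⟨i, hi, h.symm⟩

theorem mem_cutSet {P n i x : ℕ} : x ∈ cutSet P n i ↔ x ≤ n ∧ P ∣ x + i := by
  constructor
  · rintro ⟨m, ⟨him, hmn, hPm⟩, rfl⟩
    exact ⟨show m - i ≤ n by omega, by rwa [Nat.sub_add_cancel him]⟩
  · rintro ⟨hxn, hPx⟩
    exact ⟨x + i, ⟨by omega, by omega, hPx⟩, show x + i - i = x by omega⟩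

theorem cutSet_nonempty {P n : ℕ} (hP : 0 < P) (hn : P - 1 ≤ n) (i : ℕ) :
    (cutSet P n i).Nonempty := by
  have hr := Nat.mod_lt (i + P - 1) hP
  refine ⟨P - 1 - (i + P - 1) % P, mem_cutSet.2 ⟨by omega, ?_⟩⟩
  rw [show P - 1 - (i + P - 1) % P + i = i + P - 1 - (i + P - 1) % P by omega]
  exact Nat.dvd_sub_mod _

theorem cutSet_congr {P n i i' : ℕ} (h : i ≡ i' [MOD P]) : cutSet P n i = cutSet P n i' := by
  ext x
  simp only [mem_cutSet, (h.add_left x).dvd_iff dvd_rfl]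

theorem cutSet_eq_cutSet_iff {P n i i' : ℕ} (hP : 0 < P) (hn : P - 1 ≤ n) :
    cutSet P n i = cutSet P n i' ↔ i ≡ i' [MOD P] := by
  refine ⟨fun h => ?_, cutSet_congr⟩
  obtain ⟨x, hx⟩ := cutSet_nonempty hP hn i
  have hx' : x ∈ cutSet P n i' := h ▸ hx
  exact Nat.ModEq.add_left_cancel' x <|
    (Nat.modEq_zero_iff_dvd.2 (mem_cutSet.1 hx).2).trans
      (Nat.modEq_zero_iff_dvd.2 (mem_cutSet.1 hx').2).symm

theorem exists_image_cutSet_eq_singleton_iff {P n : ℕ} {O : Set ℕ} (hP : 0 < P)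
    (hn : P - 1 ≤ n) (hO : O.Nonempty) :
    (∃ C, cutSet P n '' O = {C}) ↔ ∀ i ∈ O, ∀ i' ∈ O, i ≡ i' [MOD P] := by
  simp only [Set.exists_eq_singleton_iff_nonempty_subsingleton, hO.image, true_and,
    Set.Subsingleton, Set.forall_mem_image, cutSet_eq_cutSet_iff hP hn]

theorem image_cutSet_eq_pair {P n i i' : ℕ} {O : Set ℕ} (hi : i ∈ O) (hi' : i' ∈ O)
    (hO : ∀ i'' ∈ O, i'' ≡ i [MOD P] ∨ i'' ≡ i' [MOD P]) :
    cutSet P n '' O = {cutSet P n i, cutSet P n i'} := by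
  ext C
  constructor
  · rintro ⟨i'', hi'', rfl⟩
    exact (hO i'' hi'').imp cutSet_congr cutSet_congr
  · rintro (rfl | rfl)
    exacts [⟨i, hi, rfl⟩, ⟨i', hi', rfl⟩]

theorem sInf_cutSet_lt {P n : ℕ} (hP : 0 < P) (hn : P - 1 ≤ n) (i : ℕ) :
    sInf (cutSet P n i) < P := by
  have ha := mem_cutSet.1 (Nat.sInf_mem (cutSet_nonempty hP hn i))
  by_contra! hPa
  have hmem : sInf (cutSet P n i) - P ∈ cutSet P n i := by
    refine mem_cutSet.2 ⟨by omega, ?_⟩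
    rw [show sInf (cutSet P n i) - P + i = sInf (cutSet P n i) + i - P by omega]
    exact Nat.dvd_sub ha.2 dvd_rfl
  have := Nat.sInf_le hmem
  omega

theorem sInf_cutSet_sub_eq {h n i i' : ℕ} (hh : 0 < h) (hn : 2 * h - 1 ≤ n)
    (hi : i' ≡ i + h [MOD 2 * h]) :
    sInf (cutSet (2 * h) n i) - sInf (cutSet (2 * h) n i') = h ∨
      sInf (cutSet (2 * h) n i') - sInf (cutSet (2 * h) n i) = h := by
  have hP : 0 < 2 * h := by omega
  set a := sInf (cutSet (2 * h) n i)
  set b := sInf (cutSet (2 * h) n i')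
  have ha := mem_cutSet.1 (Nat.sInf_mem (cutSet_nonempty hP hn i))
  have hb := mem_cutSet.1 (Nat.sInf_mem (cutSet_nonempty hP hn i'))
  have ha' : a < 2 * h := sInf_cutSet_lt hP hn i
  have hb' : b < 2 * h := sInf_cutSet_lt hP hn i'
  have hab : a ≡ b + h [MOD 2 * h] := Nat.ModEq.add_right_cancel' i <|
    calc a + i ≡ 0 [MOD 2 * h] := Nat.modEq_zero_iff_dvd.2 ha.2
      _ ≡ b + i' [MOD 2 * h] := (Nat.modEq_zero_iff_dvd.2 hb.2).symm
      _ ≡ b + (i + h) [MOD 2 * h] := hi.add_left b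
      _ = b + h + i := by ring
  unfold Nat.ModEq at hab
  rw [Nat.mod_eq_of_lt ha'] at hab
  rcases lt_or_ge (b + h) (2 * h) with hlt | hge
  · rw [Nat.mod_eq_of_lt hlt] at hab
    left; omega
  · rw [Nat.mod_eq_sub_mod hge, Nat.mod_eq_of_lt (by omega)] at hab
    right; omega

theorem cut_two_elements_general (k : ℕ) (hk : 3 ≤ k) (u : List Bool) (hu : isFactorTM u)
    (h₁ : 2 ^ k - 1 ≤ u.length) :
    ((¬ ∃ C : Set ℕ, CutTM k u = {C}) ↔
      (u <:+: phiW^[k - 1] [false, true, false] ∨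
       u <:+: phiW^[k - 1] [true, false, true])) ∧
    ((¬ ∃ C : Set ℕ, CutTM k u = {C}) →
      ∃ C₁ C₂ : Set ℕ, C₁ ≠ C₂ ∧ CutTM k u = {C₁, C₂} ∧
        (sInf C₁ - sInf C₂ = 2 ^ (k - 1) ∨ sInf C₂ - sInf C₁ = 2 ^ (k - 1))) := by
  obtain ⟨k, rfl⟩ : ∃ k', k = k' + 1 := ⟨k - 1, by omega⟩
  rw [Nat.add_sub_cancel, cutTM_eq_image]
  set O := {i | u = tmFactor i u.length}
  have hP : 0 < 2 ^ (k + 1) := by positivity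
  have hn₄ : 4 ≤ u.length := by
    have : 2 ^ 3 ≤ 2 ^ (k + 1) := Nat.pow_le_pow_right (by norm_num) hk
    omega
  have misaligned : ∀ i ∈ O, ∀ i' ∈ O, ¬ i ≡ i' [MOD 2 ^ (k + 1)] →
      PhiIterInfix k u ∧ i' ≡ i + 2 ^ k [MOD 2 ^ (k + 1)] := by
    intro i (hi : u = _) i' (hi' : u = _) hne
    have := phiIterInfix_and_modEq_of_tmFactor_eq k h₁ (Or.inr hn₄) (hi.symm.trans hi') hne
    rwa [← hi] at this
  have not_singleton_iff : (¬ ∃ C, cutSet (2 ^ (k + 1)) u.length '' O = {C}) ↔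
      ∃ i ∈ O, ∃ i' ∈ O, ¬ i ≡ i' [MOD 2 ^ (k + 1)] := by
    rw [exists_image_cutSet_eq_singleton_iff (O := O) hP h₁ hu]
    simp only [not_forall, exists_prop]
  refine ⟨not_singleton_iff.trans
    ⟨fun ⟨i, hi, i', hi', hne⟩ => (misaligned i hi i' hi' hne).1,
      exists_not_modEq_of_phiIterInfix⟩, fun hns => ?_⟩
  obtain ⟨i, hi, i', hi', hne⟩ := not_singleton_iff.1 hns
  have hshift := (misaligned i hi i' hi' hne).2
  refine ⟨_, _, (cutSet_eq_cutSet_iff hP h₁).not.2 hne,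
    image_cutSet_eq_pair hi hi' fun i'' hi'' => ?_, ?_⟩
  · by_cases h : i'' ≡ i [MOD 2 ^ (k + 1)]
    exacts [Or.inl h, Or.inr ((misaligned i hi i'' hi'' (h ∘ .symm)).2.trans hshift.symm)]
  · rw [pow_succ'] at h₁ hshift ⊢
    exact sInf_cutSet_sub_eq (by positivity) h₁ hshift

theorem cut_two_elements (k : ℕ) (hk : 3 ≤ k) (u : List Bool) (hu : isFactorTM u)
    (h₁ : 2 ^ k - 1 ≤ u.length) (h₂ : u.length ≤ 3 * 2 ^ (k - 1)) :
    ((¬ ∃ C : Set ℕ, CutTM k u = {C}) ↔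
      (u <:+: phiW^[k - 1] [false, true, false] ∨
       u <:+: phiW^[k - 1] [true, false, true])) ∧
    ((¬ ∃ C : Set ℕ, CutTM k u = {C}) →
      ∃ C₁ C₂ : Set ℕ, C₁ ≠ C₂ ∧ CutTM k u = {C₁, C₂} ∧
        (sInf C₁ - sInf C₂ = 2 ^ (k - 1) ∨ sInf C₂ - sInf C₁ = 2 ^ (k - 1))) :=
  cut_two_elements_general k hk u hu h₁
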